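/- arXiv:2401.01619 — 7 statements merged into one kernel-verified Lean document; each statement's English description precedes it below -/
import Mathlib

section
/- Let C be a code over F_q of length n with 2 ≤ d_sp(C) ≤ n, where d_sp(C) is the minimum symbol-pair distance. Then |C| ≤ q^(n - d_sp(C) + 2). -/
/-- cyclic successor index in `Fin n`. -/
def nextIdx {n : ℕ} (i : Fin n) : Fin n := ⟨(i.val + 1) % n, Nat.mod_lt _ i.pos⟩

/-- symbol-pair distance between two vectors of `F_q^n`. -/
def pairDist {n : ℕ} {F : Type*} [DecidableEq F] (u v : Fin n → F) : ℕ :=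
  (Finset.univ.filter (fun i : Fin n =>
    (u i, u (nextIdx i)) ≠ (v i, v (nextIdx i)))).card

/-! If two words agree on their first `k` coordinates, their pair read vectors can only differ
at the positions `k - 1, …, n - 1`, so their symbol-pair distance is at most `n + 1 - k`.
For `k = n - d + 2` this is `d - 1`, hence projecting a code of minimum symbol-pair distance `d`
onto its first `n - d + 2` coordinates is injective. -/

namespace SymbolPair

variable {n : ℕ} {F : Type*}

theorem nextIdx_val_le (i : Fin n) : (nextIdx i).val ≤ i.val + 1 :=
  Nat.mod_le _ _

theorem card_filter_sub_one_le_val (k : ℕ) :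
    (Finset.univ.filter fun i : Fin n => k - 1 ≤ i.val).card ≤ n + 1 - k := by
  have hsplit := Finset.card_filter_add_card_filter_not (s := (Finset.univ : Finset (Fin n)))
    (fun i : Fin n => i.val < k - 1)
  simp only [not_lt, Finset.card_univ, Fintype.card_fin, Fin.card_filter_val_lt] at hsplit
  omega

variable [DecidableEq F]

theorem pairDist_le_of_forall_val_lt_eq {u v : Fin n → F} (k : ℕ)
    (h : ∀ i : Fin n, i.val < k → u i = v i) : pairDist u v ≤ n + 1 - k := by
  refine le_trans (Finset.card_le_card fun i hi => ?_) (card_filter_sub_one_le_val k)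
  simp only [Finset.mem_filter, Finset.mem_univ, true_and] at hi ⊢
  by_contra! hik
  exact hi (by rw [h i (by omega), h (nextIdx i) (by have := nextIdx_val_le i; omega)])

theorem card_le_pow_of_le_pairDist (C : Finset (Fin n → F)) {d : ℕ} [Fintype F]
    (h2 : 2 ≤ d) (hn : d ≤ n) (hC : ∀ u ∈ C, ∀ v ∈ C, u ≠ v → d ≤ pairDist u v) :
    C.card ≤ Fintype.card F ^ (n - d + 2) := by
  have hk : n - d + 2 ≤ n := by omega
  let restrict : (Fin n → F) → Fin (n - d + 2) → F := fun u j => u (Fin.castLE hk j)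
  have hinj : Set.InjOn restrict C := by
    intro u hu v hv huv
    by_contra hne
    have hle : pairDist u v ≤ n + 1 - (n - d + 2) :=
      pairDist_le_of_forall_val_lt_eq _ fun i hi => congrFun huv ⟨i.val, hi⟩
    have := hC u hu v hv hne
    omega
  calc C.card ≤ (Finset.univ : Finset (Fin (n - d + 2) → F)).card :=
        Finset.card_le_card_of_injOn restrict (fun _ _ => Finset.mem_univ _) hinj
    _ = Fintype.card F ^ (n - d + 2) := by simp

end SymbolPair

theorem stmt0_general {n : ℕ} {F : Type*} [Fintype F] [DecidableEq F]
    (C : Finset (Fin n → F)) (d : ℕ)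
    (hd : d = sInf {k | ∃ u ∈ C, ∃ v ∈ C, u ≠ v ∧ pairDist u v = k})
    (h2 : 2 ≤ d) (hn : d ≤ n) :
    C.card ≤ Fintype.card F ^ (n - d + 2) :=
  SymbolPair.card_le_pow_of_le_pairDist C h2 hn fun u hu v hv huv =>
    hd ▸ Nat.sInf_le ⟨u, hu, v, hv, huv, rfl⟩

/-- Singleton bound for symbol-pair codes. -/
theorem stmt0 {n : ℕ} {F : Type*} [Field F] [Fintype F] [DecidableEq F]
    (C : Finset (Fin n → F)) (d : ℕ)
    (hd : d = sInf {k | ∃ u ∈ C, ∃ v ∈ C, u ≠ v ∧ pairDist u v = k})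
    (h2 : 2 ≤ d) (hn : d ≤ n) :
    C.card ≤ Fintype.card F ^ (n - d + 2) :=
  stmt0_general C d hd h2 hn
end

section
/- For a code C ⊆ F_q^n with at least two codewords and 0 < d_H(C) < n, we have d_H(C) + 1 ≤ d_sp(C) ≤ min(2·d_H(C), n). -/
/-- Hamming distance. -/
def hammingDist' {n : ℕ} {F : Type*} [DecidableEq F] (u v : Fin n → F) : ℕ :=
  (Finset.univ.filter (fun i : Fin n => u i ≠ v i)).card

/-
A pair position differs exactly when the position itself or its cyclic successor differs, so the
pair-difference set of `u` and `v` is `D ∪ σ⁻¹ D`, where `D` is their Hamming-difference set and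
`σ` the cyclic shift. Its size therefore lies between `|D|` and `2|D|`. If `D` is neither empty
nor everything, it is not invariant under `σ`, which is a single cycle through all positions, so
the union is strictly larger than `D`. Taking minima over the code gives both bounds.
-/

open Finset Equiv

theorem Equiv.Perm.IsCycle.exists_notMem_apply_mem {α : Type*} [Finite α] {σ : Perm α}
    (hσ : σ.IsCycle) (hsupp : ∀ x, σ x ≠ x) {S : Set α} {x y : α} (hx : x ∈ S) (hy : y ∉ S) :
    ∃ j ∉ S, σ j ∈ S := by
  obtain ⟨k, hk⟩ := hσ.exists_pow_eq (hsupp y) (hsupp x)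
  by_contra! hclosed
  have hout : ∀ m : ℕ, (σ ^ m) y ∉ S := by
    intro m
    induction m with
    | zero => exact hy
    | succ m ih => rw [pow_succ', Perm.mul_apply]; exact hclosed _ ih
  exact hout k (hk ▸ hx)

theorem nextIdx_eq_finRotate {n : ℕ} (i : Fin n) : nextIdx i = finRotate n i := by
  rw [finRotate_apply]
  ext
  simp [nextIdx, Fin.val_add]

section

variable {n : ℕ} {F : Type*} [DecidableEq F] (u v : Fin n → F)

theorem pairDist_eq_card_union : pairDist u v =
    #(univ.filter (fun i => u i ≠ v i) ∪ univ.filter (fun i => u (nextIdx i) ≠ v (nextIdx i))) := by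
  rw [pairDist, ← filter_or]
  simp only [ne_eq, Prod.ext_iff, not_and_or]

theorem card_filter_nextIdx_ne :
    #(univ.filter fun i => u (nextIdx i) ≠ v (nextIdx i)) = hammingDist' u v :=
  card_equiv (finRotate n) (by simp [nextIdx_eq_finRotate])

theorem hammingDist'_le_pairDist : hammingDist' u v ≤ pairDist u v := by
  rw [pairDist_eq_card_union]
  exact card_le_card subset_union_left

theorem pairDist_le_two_mul_hammingDist' : pairDist u v ≤ 2 * hammingDist' u v := by
  rw [pairDist_eq_card_union, two_mul]
  exact (card_union_le _ _).trans_eq (congrArg _ (card_filter_nextIdx_ne u v))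

theorem pairDist_le_length : pairDist u v ≤ n :=
  (card_filter_le _ _).trans_eq (card_fin n)

variable {u v}

theorem hammingDist'_lt_pairDist (huv : u ≠ v) (hn : hammingDist' u v < n) :
    hammingDist' u v < pairDist u v := by
  set D := univ.filter fun i => u i ≠ v i
  obtain ⟨x, hx⟩ : ∃ x, x ∈ D := by simpa [D, Function.ne_iff] using huv
  obtain ⟨y, -, hy⟩ : ∃ y ∈ univ, y ∉ D :=
    exists_mem_notMem_of_card_lt_card (hn.trans_eq (card_fin n).symm)
  have h2 : 1 < n := by simpa using Fintype.one_lt_card_iff.2 ⟨x, y, fun h => hy (h ▸ hx)⟩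
  obtain ⟨j, hjD, hj⟩ := (isCycle_finRotate_of_le h2).exists_notMem_apply_mem (S := D)
    (fun x => Perm.mem_support.1 (support_finRotate_of_le h2 ▸ mem_univ x)) hx hy
  rw [pairDist_eq_card_union]
  refine card_lt_card <|
    (ssubset_iff_of_subset subset_union_left).2 ⟨j, mem_union_right _ ?_, hjD⟩
  simpa [D, nextIdx_eq_finRotate] using hj

end

theorem stmt4_general {n : ℕ} {F : Type*} [DecidableEq F]
    (C : Finset (Fin n → F)) (hC : 1 < C.card) (dH dsp : ℕ)
    (hdH : dH = sInf {k | ∃ u ∈ C, ∃ v ∈ C, u ≠ v ∧ hammingDist' u v = k})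
    (hdsp : dsp = sInf {k | ∃ u ∈ C, ∃ v ∈ C, u ≠ v ∧ pairDist u v = k})
    (hn : dH < n) :
    dH + 1 ≤ dsp ∧ dsp ≤ min (2 * dH) n := by
  obtain ⟨a, ha, b, hb, hab⟩ := one_lt_card.1 hC
  set H := {k | ∃ u ∈ C, ∃ v ∈ C, u ≠ v ∧ hammingDist' u v = k}
  set P := {k | ∃ u ∈ C, ∃ v ∈ C, u ≠ v ∧ pairDist u v = k}
  have hH : H.Nonempty := ⟨_, a, ha, b, hb, hab, rfl⟩
  have hP : P.Nonempty := ⟨_, a, ha, b, hb, hab, rfl⟩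
  constructor
  · rw [hdsp]
    refine le_csInf hP ?_
    rintro _ ⟨u, hu, v, hv, huv, rfl⟩
    have hmin : dH ≤ hammingDist' u v := hdH ▸ Nat.sInf_le ⟨u, hu, v, hv, huv, rfl⟩
    rcases lt_or_ge (hammingDist' u v) n with hlt | hge
    · exact hmin.trans_lt (hammingDist'_lt_pairDist huv hlt)
    · exact hn.trans_le (hge.trans (hammingDist'_le_pairDist u v))
  · obtain ⟨u, hu, v, hv, huv, hdHuv⟩ := hdH ▸ Nat.sInf_mem hH
    have hsp : dsp ≤ pairDist u v := hdsp ▸ Nat.sInf_le ⟨u, hu, v, hv, huv, rfl⟩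
    exact le_min (hsp.trans (hdHuv ▸ pairDist_le_two_mul_hammingDist' u v))
      (hsp.trans (pairDist_le_length u v))

theorem stmt4 {n : ℕ} {F : Type*} [Field F] [DecidableEq F]
    (C : Finset (Fin n → F)) (hC : 1 < C.card) (dH dsp : ℕ)
    (hdH : dH = sInf {k | ∃ u ∈ C, ∃ v ∈ C, u ≠ v ∧ hammingDist' u v = k})
    (hdsp : dsp = sInf {k | ∃ u ∈ C, ∃ v ∈ C, u ≠ v ∧ pairDist u v = k})
    (h0 : 0 < dH) (hn : dH < n) :
    dH + 1 ≤ dsp ∧ dsp ≤ min (2 * dH) n :=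
  stmt4_general C hC dH dsp hdH hdsp hn
end

section
/- Let C = [C_1,...,C_M]·A be a matrix-product code where A is an M×M invertible matrix over F_q and C_1,...,C_M are linear codes of length n. Then the dual code satisfies C^⊥ = [C_1^⊥, ..., C_M^⊥]·(A^{-1})^T. -/
/-- The matrix-product code `[C_1,...,C_M]·A`, viewed as a set of words of
length `n*N` indexed by pairs `(j, i)` (block `j`, position `i`). -/
def MPcode {F : Type*} [Field F] {n M N : ℕ}
    (C : Fin M → Set (Fin n → F)) (A : Matrix (Fin M) (Fin N) F) :
    Set (Fin N × Fin n → F) :=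
  { y | ∃ x : Fin M → Fin n → F, (∀ m, x m ∈ C m) ∧
        ∀ j i, y (j, i) = ∑ m, A m j * x m i }

/-- The dual of a code, with respect to the standard bilinear form. -/
def dualCode {F : Type*} [Field F] {ι : Type*} [Fintype ι] (S : Set (ι → F)) :
    Set (ι → F) :=
  { y | ∀ x ∈ S, ∑ i, x i * y i = 0 }

/-! Write a word of length `n * N` as an `N × n` matrix. Then `[C_1,...,C_M]·A` consists of
the matrices `Aᵀ X` whose `m`-th row lies in `C_m`, and the standard pairing satisfies
`⟨Aᵀ X, Y⟩ = ⟨X, A Y⟩`. So if `A Bᵀ = 1`, every `Bᵀ W` with rows in the `C_m^⊥` is orthogonal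
to every `Aᵀ X`. Conversely, if `y` is orthogonal to the code, pairing it with the `X` having a
single nonzero row shows that the rows of `W := A y` lie in the `C_m^⊥`, and `y = Bᵀ W` when
`Bᵀ A = 1`.
-/

open Matrix

theorem sum_sum_transpose_mul_mul {R l m n : Type*} [CommSemiring R] [Fintype l] [Fintype m]
    [Fintype n] (A : Matrix m l R) (X : Matrix m n R) (Y : Matrix l n R) :
    ∑ j, ∑ i, (Aᵀ * X) j i * Y j i = ∑ k, ∑ i, X k i * (A * Y) k i := by
  simp only [mul_apply, transpose_apply, Finset.sum_mul, Finset.mul_sum]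
  rw [Finset.sum_comm]
  conv_rhs => rw [Finset.sum_comm]
  refine Finset.sum_congr rfl fun i _ => ?_
  rw [Finset.sum_comm]
  exact Finset.sum_congr rfl fun k _ => Finset.sum_congr rfl fun j _ => by ring

section MatrixProductCode

variable {F : Type*} [Field F] {n M N : ℕ}

theorem mem_MPcode_iff {C : Fin M → Set (Fin n → F)} {A : Matrix (Fin M) (Fin N) F}
    {y : Fin N × Fin n → F} :
    y ∈ MPcode C A ↔
      ∃ X : Matrix (Fin M) (Fin n) F, (∀ m, X m ∈ C m) ∧ ∀ j i, y (j, i) = (Aᵀ * X) j i :=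
  Iff.rfl

theorem MPcode_dualCode_subset_dualCode_MPcode {C : Fin M → Set (Fin n → F)}
    {A B : Matrix (Fin M) (Fin N) F} (hAB : A * Bᵀ = 1) :
    MPcode (fun m => dualCode (C m)) B ⊆ dualCode (MPcode C A) := by
  intro y hy x hx
  obtain ⟨W, hW, hyW⟩ := mem_MPcode_iff.1 hy
  obtain ⟨X, hX, hxX⟩ := mem_MPcode_iff.1 hx
  calc ∑ p, x p * y p = ∑ j, ∑ i, (Aᵀ * X) j i * (Bᵀ * W) j i := by
        simp only [Fintype.sum_prod_type, hxX, hyW]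
    _ = ∑ m, ∑ i, X m i * W m i := by
        rw [sum_sum_transpose_mul_mul, ← Matrix.mul_assoc, hAB, Matrix.one_mul]
    _ = 0 := Finset.sum_eq_zero fun m _ => hW m (X m) (hX m)

theorem dualCode_MPcode_subset_MPcode_dualCode {C : Fin M → Submodule F (Fin n → F)}
    {A B : Matrix (Fin M) (Fin N) F} (hBA : Bᵀ * A = 1) :
    dualCode (MPcode (fun m => (C m : Set (Fin n → F))) A) ⊆
      MPcode (fun m => dualCode (C m : Set (Fin n → F))) B := by
  intro y hy
  set Y : Matrix (Fin N) (Fin n) F := of fun j i => y (j, i)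
  refine mem_MPcode_iff.2
    ⟨A * Y, fun m c hc => ?_, fun j i => by rw [← Matrix.mul_assoc, hBA, Matrix.one_mul]; rfl⟩
  set X : Matrix (Fin M) (Fin n) F := Pi.single m c
  have hX : (fun p : Fin N × Fin n => (Aᵀ * X) p.1 p.2) ∈
      MPcode (fun m => (C m : Set (Fin n → F))) A := by
    refine mem_MPcode_iff.2 ⟨X, fun m' => ?_, fun _ _ => rfl⟩
    rcases eq_or_ne m' m with rfl | h
    · simpa [X] using hc
    · simp [X, h]
  calc ∑ i, c i * (A * Y) m i = ∑ k, ∑ i, X k i * (A * Y) k i := by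
        rw [Fintype.sum_eq_single m fun k hk => by simp [X, hk]]
        simp [X]
    _ = ∑ j, ∑ i, (Aᵀ * X) j i * Y j i := (sum_sum_transpose_mul_mul A X Y).symm
    _ = 0 := by rw [← hy _ hX, Fintype.sum_prod_type]; rfl

end MatrixProductCode

/-- The dual of a matrix-product code with an invertible square matrix `A` is
the matrix-product code of the duals with matrix `(A⁻¹).transpose`. -/
theorem stmt7 {F : Type*} [Field F] {n M : ℕ}
    (C : Fin M → Submodule F (Fin n → F))
    (A : Matrix (Fin M) (Fin M) F) (hA : IsUnit A.det) :
    dualCode (MPcode (fun m => (C m : Set (Fin n → F))) A)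
      = MPcode (fun m => dualCode (C m : Set (Fin n → F))) (A⁻¹).transpose := by
  refine (dualCode_MPcode_subset_MPcode_dualCode ?_).antisymm
    (MPcode_dualCode_subset_dualCode_MPcode ?_)
  · rw [transpose_transpose, nonsing_inv_mul A hA]
  · rw [transpose_transpose, mul_nonsing_inv A hA]
end

section
/- Let C_M ⊆ ... ⊆ C_1 be nested linear codes of length n over F_q and A an M×N NSC matrix. Let c = (c_1,...,c_N) be a codeword of [C_1,...,C_M]·A in blocks of length n. If more than M-1 of the blocks c_1,...,c_N are zero, then c = 0. -/
/-- non-singular by columns. -/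
def NSC {F : Type*} [Field F] {M N : ℕ} (A : Matrix (Fin M) (Fin N) F) : Prop :=
  ∀ (t : ℕ) (_ : 0 < t) (htM : t ≤ M) (g : Fin t → Fin N), StrictMono g →
    (Matrix.of (fun i j : Fin t => A (Fin.castLE htM i) (g j))).det ≠ 0

theorem NSC.det_submatrix_ne_zero {F : Type*} [Field F] {M N : ℕ}
    {A : Matrix (Fin M) (Fin N) F} (hA : NSC A) {g : Fin M → Fin N} (hg : StrictMono g) :
    (A.submatrix id g).det ≠ 0 := by
  rcases Nat.eq_zero_or_pos M with rfl | hM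
  · simp [Matrix.det_isEmpty]
  · have h := hA M hM le_rfl g hg
    simp only [Fin.castLE_refl] at h
    exact h

theorem Finset.exists_strictMono_mem {N M : ℕ} {s : Finset (Fin N)} (h : M ≤ s.card) :
    ∃ g : Fin M → Fin N, StrictMono g ∧ ∀ k, g k ∈ s :=
  ⟨s.orderEmbOfFin rfl ∘ Fin.castLE h,
    (s.orderEmbOfFin rfl).strictMono.comp (Fin.castLEOrderEmb h).strictMono,
    fun _ => s.orderEmbOfFin_mem rfl _⟩

theorem eq_zero_of_mem_MPcode_of_blocks_eq_zero {F : Type*} [Field F] {n M N : ℕ}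
    {C : Fin M → Set (Fin n → F)} {A : Matrix (Fin M) (Fin N) F} {y : Fin N × Fin n → F}
    (hy : y ∈ MPcode C A) {g : Fin M → Fin N} (hdet : (A.submatrix id g).det ≠ 0)
    (hblock : ∀ k i, y (g k, i) = 0) :
    y = 0 := by
  obtain ⟨x, -, hyx⟩ := hy
  have hx : ∀ i m, x m i = 0 := fun i => congrFun <| Matrix.eq_zero_of_vecMul_eq_zero hdet <| by
    funext k
    simp only [Matrix.vecMul, dotProduct, Matrix.submatrix_apply, id, mul_comm (x _ i)]
    rw [← hyx, hblock, Pi.zero_apply]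
  funext ⟨j, i⟩
  simp [hyx, hx]

theorem stmt9_general {F : Type*} [Field F] [DecidableEq F] {n M N : ℕ}
    (C : Fin M → Submodule F (Fin n → F))
    (A : Matrix (Fin M) (Fin N) F) (hA : NSC A)
    (y : Fin N × Fin n → F)
    (hy : y ∈ MPcode (fun m => (C m : Set (Fin n → F))) A)
    (hzero : M - 1 < (Finset.univ.filter
        (fun j : Fin N => (fun i => y (j, i)) = (0 : Fin n → F))).card) :
    y = 0 := by
  obtain ⟨g, hg, hgzero⟩ := Finset.exists_strictMono_mem (Nat.le_of_pred_lt hzero)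
  refine eq_zero_of_mem_MPcode_of_blocks_eq_zero hy (hA.det_submatrix_ne_zero hg) fun k i => ?_
  exact congrFun (Finset.mem_filter.mp (hgzero k)).2 i

/-- If more than `M - 1` blocks of a matrix-product codeword (nested codes,
NSC matrix) are zero, then the codeword is zero. -/
theorem stmt9 {F : Type*} [Field F] [DecidableEq F] {n M N : ℕ} (hMN : M ≤ N)
    (C : Fin M → Submodule F (Fin n → F))
    (hnested : ∀ i j : Fin M, i ≤ j → C j ≤ C i)
    (A : Matrix (Fin M) (Fin N) F) (hA : NSC A)
    (y : Fin N × Fin n → F)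
    (hy : y ∈ MPcode (fun m => (C m : Set (Fin n → F))) A)
    (hzero : M - 1 < (Finset.univ.filter
        (fun j : Fin N => (fun i => y (j, i)) = (0 : Fin n → F))).card) :
    y = 0 :=
  stmt9_general C A hA y hy hzero
end

section
/- Let C = [C_1,...,C_M]·A be a matrix-product code, where C_i is an [n, k_i, d_i] linear code over F_q, and A is an M×N NSC matrix. Then the minimum Hamming distance of C satisfies d_H(C) ≥ min{ d_i · (M - i + 1) : 1 ≤ i ≤ M }. -/
/-- Hamming weight. -/
def hWt {ι : Type*} [Fintype ι] {F : Type*} [Zero F] [DecidableEq F] (c : ι → F) : ℕ :=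
  (Finset.univ.filter (fun i : ι => c i ≠ 0)).card

open Finset Matrix

section Weight

variable {F : Type*} [Zero F] [DecidableEq F]

theorem hWt_eq_sum_hWt_slice {ι κ : Type*} [Fintype ι] [Fintype κ] (y : ι × κ → F) :
    hWt y = ∑ i, hWt fun j => y (j, i) := by
  simp only [hWt, card_filter]
  exact Fintype.sum_prod_type_right _

theorem mul_le_hWt_of_le_hWt_slice {ι κ : Type*} [Fintype ι] [Fintype κ] {c : κ → F}
    {y : ι × κ → F} {k : ℕ} (h : ∀ i, c i ≠ 0 → k ≤ hWt fun j => y (j, i)) :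
    hWt c * k ≤ hWt y := by
  rw [hWt_eq_sum_hWt_slice, hWt, card_eq_sum_ones, sum_mul, one_mul, sum_filter]
  gcongr with i
  split_ifs with hi
  · exact h i hi
  · exact Nat.zero_le _

theorem hWt_add_card_filter_eq_zero {ι : Type*} [Fintype ι] (c : ι → F) :
    hWt c + #{i | c i = 0} = Fintype.card ι := by
  rw [hWt, add_comm, card_filter_add_card_filter_not, card_univ]

end Weight

theorem Fin.sum_castLE_eq_sum_of_eq_zero {β : Type*} [AddCommMonoid β] {s M : ℕ}
    (hsM : s ≤ M) {f : Fin M → β} (hf : ∀ m : Fin M, s ≤ m.val → f m = 0) :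
    ∑ a : Fin s, f (Fin.castLE hsM a) = ∑ m, f m := by
  refine (sum_map univ (Fin.castLEEmb hsM) f).symm.trans ?_
  refine sum_subset (subset_univ _) fun m _ hm => hf m ?_
  by_contra! hlt
  exact hm (mem_map.2 ⟨⟨m, hlt⟩, mem_univ _, rfl⟩)

namespace NSC

variable {F : Type*} [Field F] {M N : ℕ} {A : Matrix (Fin M) (Fin N) F}

/-- `t + 1` zero columns of `v ᵥ* A` would make the `(t + 1)`-minor on them singular. -/
theorem card_vecMul_eq_zero_le [DecidableEq F] (hA : NSC A) {v : Fin M → F} {t : Fin M}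
    (hvt : v t ≠ 0) (hv : ∀ m, t < m → v m = 0) : #{j | (v ᵥ* A) j = 0} ≤ t := by
  by_contra! hcard
  obtain ⟨s, hsZ, hs⟩ := exists_subset_card_eq (Nat.succ_le_of_lt hcard)
  have htM : t.val + 1 ≤ M := t.isLt
  let g := s.orderEmbOfFin hs
  have hdet := hA (t + 1) t.val.succ_pos htM g g.strictMono
  have hw : (fun a => v (Fin.castLE htM a)) ᵥ*
      of (fun a b : Fin (t + 1) => A (Fin.castLE htM a) (g b)) = 0 := by
    funext b
    have hzero : (v ᵥ* A) (g b) = 0 := by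
      simpa using hsZ (s.orderEmbOfFin_mem hs b)
    rw [Pi.zero_apply, ← hzero]
    exact Fin.sum_castLE_eq_sum_of_eq_zero htM (f := fun m => v m * A m (g b)) fun m hm => by
      rw [hv m (by omega), zero_mul]
  exact hvt (congrFun (eq_zero_of_vecMul_eq_zero hdet hw) ⟨t, t.val.lt_succ_self⟩)

theorem sub_le_hWt_vecMul [DecidableEq F] (hA : NSC A) (hMN : M ≤ N) {v : Fin M → F}
    {t : Fin M} (hvt : v t ≠ 0) (hv : ∀ m, t < m → v m = 0) :
    M - t ≤ hWt (v ᵥ* A) := by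
  have := hWt_add_card_filter_eq_zero (v ᵥ* A)
  have := hA.card_vecMul_eq_zero_le hvt hv
  simp only [Fintype.card_fin] at *
  omega

end NSC

theorem exists_max_ne_zero {ι V : Type*} [Fintype ι] [LinearOrder ι] [Zero V] {x : ι → V}
    (hx : x ≠ 0) : ∃ t, x t ≠ 0 ∧ ∀ m, t < m → x m = 0 := by
  classical
  obtain ⟨t₀, ht₀⟩ := Function.ne_iff.1 hx
  obtain ⟨t, ht, hmax⟩ := exists_max_image {m | x m ≠ 0} id ⟨t₀, by simpa using ht₀⟩
  refine ⟨t, by simpa using ht, fun m hm => ?_⟩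
  by_contra hxm
  exact absurd (hmax m (by simpa using hxm)) (not_le.2 hm)

/-- Every nonzero codeword of the matrix-product code (NSC matrix) has Hamming
weight at least `min_i d_i (M - i + 1)` (indices `i : Fin M` being 0-based,
`M - i + 1` becomes `M - i.val`). -/
theorem stmt10 {F : Type*} [Field F] [DecidableEq F] {n M N : ℕ} (hMN : M ≤ N)
    (C : Fin M → Submodule F (Fin n → F)) (d : Fin M → ℕ)
    (hd : ∀ i, d i = sInf {w | ∃ c ∈ C i, c ≠ 0 ∧ hWt c = w})
    (A : Matrix (Fin M) (Fin N) F) (hA : NSC A)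
    (y : Fin N × Fin n → F)
    (hy : y ∈ MPcode (fun m => (C m : Set (Fin n → F))) A) (hy0 : y ≠ 0) :
    ∃ i : Fin M, d i * (M - i.val) ≤ hWt y := by
  obtain ⟨x, hxC, hxy⟩ := hy
  have hx : x ≠ 0 := by
    rintro rfl
    exact hy0 (funext fun ⟨j, i⟩ => by simp [hxy])
  obtain ⟨t, hxt, hmax⟩ := exists_max_ne_zero hx
  have hcolumn : ∀ i, (fun j => y (j, i)) = (fun m => x m i) ᵥ* A := fun i =>
    funext fun j => by simp only [hxy, vecMul, dotProduct, mul_comm]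
  have hdt : d t ≤ hWt (x t) := hd t ▸ Nat.sInf_le ⟨x t, hxC t, hxt, rfl⟩
  refine ⟨t, le_trans (Nat.mul_le_mul_right _ hdt) (mul_le_hWt_of_le_hWt_slice fun i hi => ?_)⟩
  rw [hcolumn]
  exact hA.sub_le_hWt_vecMul hMN hi fun m hm => by simp [hmax m hm]
end

section
/- Let p ≠ 3 be a prime, q = p^e, and enumerate F_q by coset blocks as above with successor map s. Then for every element α in the enumeration (with two iterated successors defined), s(α) + s(s(α)) ≠ 2α. -/
/-- Successor of an index in the coset-block enumeration of `F_q`. -/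
def succIdx {k p : ℕ} [NeZero k] [NeZero p] (m : Fin k × Fin p) : Fin k × Fin p :=
  if m.2.val = p - 1 then (m.1 + 1, 0) else (m.1, m.2 + 1)

/-- The element of the field enumerated at index `(i, j)`, namely `χ_i + j`. -/
def enumVal {k p : ℕ} {F : Type*} [Field F] (χ : Fin k → F) (m : Fin k × Fin p) : F :=
  χ m.1 + (m.2.val : F)

/-!
Inside a block the three elements `α, α + 1, α + 2` would give `3 = 0`. Where the enumeration
crosses from block `i` to block `i + 1`, the relation becomes `c (χ_{i+1} - χ_i) = -3` with
`c ∈ {1, 2}`. If `c = 0` in `F` this again says `3 = 0`; otherwise it puts `χ_{i+1} - χ_i` in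
the prime field, which forces `χ_{i+1} = χ_i` and once more `3 = 0`. And `3 ≠ 0` since `p ≠ 3`.
-/

theorem exists_natCast_eq_of_natCast_mul_eq_intCast {p : ℕ} [Fact p.Prime] {F : Type*} [Field F]
    [CharP F p] {c : ℕ} {z : ℤ} {x : F} (hc : (c : F) ≠ 0) (h : (c : F) * x = z) :
    ∃ m : ℕ, x = m := by
  refine ⟨((z : ZMod p) / c).val, ?_⟩
  rw [ZMod.natCast_val, ← ZMod.castHom_apply (h := dvd_rfl), map_div₀, map_intCast, map_natCast,
    eq_div_iff hc, mul_comm, h]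

theorem natCast_mul_sub_ne_intCast {p : ℕ} [Fact p.Prime] {F ι : Type*} [Field F] [CharP F p]
    {χ : ι → F} (hcoset : ∀ i j : ι, i ≠ j → ∀ a : ℕ, χ i - χ j ≠ (a : F))
    {z : ℤ} (hz : (z : F) ≠ 0) (c : ℕ) (i j : ι) :
    (c : F) * (χ i - χ j) ≠ z := by
  intro h
  by_cases hc : (c : F) = 0
  · exact hz (by rw [← h, hc, zero_mul])
  obtain ⟨m, hm⟩ := exists_natCast_eq_of_natCast_mul_eq_intCast hc h
  obtain rfl : i = j := by_contra fun hij => hcoset i j hij m hm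
  exact hz (by rw [← h, sub_self, mul_zero])

theorem enumVal_of_eq {k p : ℕ} [NeZero p] {F : Type*} [Field F] [CharP F p] (χ : Fin k → F)
    {m : Fin k × Fin p} (h : m.2.val = p - 1) : enumVal χ m = χ m.1 - 1 := by
  rw [enumVal, h, Nat.cast_pred (NeZero.pos p), CharP.cast_eq_zero, zero_sub, sub_eq_add_neg]

section Enumeration

variable {k p : ℕ} [NeZero k] [NeZero p] {F : Type*} [Field F] (χ : Fin k → F)

theorem succIdx_of_ne {m : Fin k × Fin p} (h : m.2.val ≠ p - 1) : succIdx m = (m.1, m.2 + 1) :=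
  if_neg h

theorem succIdx_of_eq {m : Fin k × Fin p} (h : m.2.val = p - 1) : succIdx m = (m.1 + 1, 0) :=
  if_pos h

theorem enumVal_succIdx_of_ne {m : Fin k × Fin p} (h : m.2.val ≠ p - 1) :
    enumVal χ (succIdx m) = enumVal χ m + 1 := by
  have hlt : m.2.val + 1 < p := by have := m.2.isLt; omega
  simp only [succIdx_of_ne h, enumVal, Fin.val_add_one_of_lt' hlt, Nat.cast_succ, add_assoc]

theorem enumVal_succIdx_of_eq {m : Fin k × Fin p} (h : m.2.val = p - 1) :
    enumVal χ (succIdx m) = χ (m.1 + 1) := by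
  simp [succIdx_of_eq h, enumVal]

/-- The coefficient `c` counts how many of `s(α), s(s(α))` lie in the next block. -/
theorem exists_enumVal_succIdx_add_succIdx_succIdx [CharP F p] (m : Fin k × Fin p) :
    ∃ c : ℕ, enumVal χ (succIdx m) + enumVal χ (succIdx (succIdx m))
      = 2 * enumVal χ m + c * (χ (m.1 + 1) - χ m.1) + 3 := by
  obtain ⟨i, j⟩ := m
  by_cases hj : j.val = p - 1
  · have hzero : ((0 : Fin p)).val ≠ p - 1 := by
      have := CharP.char_ne_one F p; have := NeZero.pos p; rw [Fin.val_zero]; omega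
    have hs := succIdx_of_eq (m := (i, j)) hj
    refine ⟨2, ?_⟩
    rw [enumVal_succIdx_of_ne χ (m := succIdx (i, j)) (by rw [hs]; exact hzero),
      enumVal_succIdx_of_eq χ hj, enumVal_of_eq χ (m := (i, j)) hj]
    push_cast; ring
  rw [enumVal_succIdx_of_ne χ hj]
  have hs := succIdx_of_ne (m := (i, j)) hj
  by_cases hj' : (succIdx (i, j)).2.val = p - 1
  · have hval := enumVal_of_eq χ hj'
    rw [enumVal_succIdx_of_ne χ hj, hs] at hval
    refine ⟨1, ?_⟩
    rw [enumVal_succIdx_of_eq χ hj', hs]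
    linear_combination -hval
  · refine ⟨0, ?_⟩
    rw [enumVal_succIdx_of_ne χ hj', enumVal_succIdx_of_ne χ hj]
    ring

end Enumeration

theorem three_ne_zero_of_ne_three {p : ℕ} (hp : p.Prime) (hp3 : p ≠ 3) {F : Type*} [Field F]
    [CharP F p] : (3 : F) ≠ 0 := by
  rw [← Nat.cast_ofNat, Ne, CharP.cast_eq_zero_iff F p,
    Nat.prime_dvd_prime_iff_eq hp Nat.prime_three]
  exact hp3

theorem stmt15_general {p k : ℕ} [NeZero k] [NeZero p] (hp : p.Prime) (hp3 : p ≠ 3)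
    {F : Type*} [Field F] [CharP F p]
    (χ : Fin k → F)
    (hcoset : ∀ i j : Fin k, i ≠ j → ∀ a : ℕ, χ i - χ j ≠ (a : F))
    (m : Fin k × Fin p) :
    enumVal χ (succIdx m) + enumVal χ (succIdx (succIdx m))
      ≠ 2 * enumVal χ m := by
  have := Fact.mk hp
  obtain ⟨c, hc⟩ := exists_enumVal_succIdx_add_succIdx_succIdx χ m
  have h3 : ((-3 : ℤ) : F) ≠ 0 := by
    push_cast; exact neg_ne_zero.mpr (three_ne_zero_of_ne_three hp hp3)
  intro h
  apply natCast_mul_sub_ne_intCast hcoset h3 c (m.1 + 1) m.1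
  push_cast
  linear_combination h - hc

/-- For the coset-block enumeration of `F_q` (`p` prime, `p ≠ 3`), every
element `α` satisfies `s(α) + s(s(α)) ≠ 2α`. -/
theorem stmt15 {p e k : ℕ} [NeZero k] [NeZero p] (hp : p.Prime) (hp3 : p ≠ 3)
    {F : Type*} [Field F] [Fintype F] [CharP F p]
    (hcard : Fintype.card F = p ^ e) (hkp : Fintype.card F = k * p)
    (χ : Fin k → F) (hχ0 : χ 0 = 0)
    (hcoset : ∀ i j : Fin k, i ≠ j → ∀ a : ℕ, χ i - χ j ≠ (a : F))
    (m : Fin k × Fin p) :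
    enumVal χ (succIdx m) + enumVal χ (succIdx (succIdx m))
      ≠ 2 * enumVal χ m :=
  stmt15_general hp hp3 χ hcoset m
end

section
/- Let q ≡ 1 (mod 3) be a prime power and n with 4 ≤ n ≤ q. Let C = [GRS_1, GRS_2, GRS_3]·A be the [3n, 3n-6, 4] matrix-product code as above, with A the 3×3 Vandermonde matrix in a primitive cube root of unity ω. If c = (c_1, c_2, c_3) ∈ C (blocks of length n) has Hamming weight 4, then exactly one block c_j is nonzero and the other two are zero. -/
/-- The GRS code of length `n` with evaluation points `α`, dimension `n - i`. -/
def GRScode {n : ℕ} {F : Type*} [Field F] (α : Fin n → F) (i : ℕ) :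
    Set (Fin n → F) :=
  { c | ∀ j < i, ∑ x, α x ^ j * c x = 0 }

open Finset Polynomial

lemma hWt_prod {ι κ F : Type*} [Fintype ι] [Fintype κ] [Zero F] [DecidableEq F]
    (y : ι × κ → F) : hWt y = ∑ j, hWt (fun i => y (j, i)) := by
  simp only [hWt, card_filter]
  exact Fintype.sum_prod_type _

lemma hWt_eq_zero_iff {ι F : Type*} [Fintype ι] [Zero F] [DecidableEq F] {c : ι → F} :
    hWt c = 0 ↔ c = 0 := by
  simp [hWt, filter_eq_empty_iff, funext_iff]

lemma existsUnique_ne_zero_of_sum_eq {ι : Type*} [Fintype ι] {w : ι → ℕ} {s t : ℕ}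
    (hsum : ∑ j, w j = s) (hs0 : s ≠ 0) (hst : s < 2 * t) (hw : ∀ j, w j ≠ 0 → t ≤ w j) :
    ∃! j, w j ≠ 0 := by
  classical
  obtain ⟨j, -, hj⟩ := exists_ne_zero_of_sum_ne_zero (hsum ▸ hs0 : ∑ j ∈ univ, w j ≠ 0)
  refine ⟨j, hj, fun k hk => by_contra fun hkj => ?_⟩
  have hpair : w k + w j ≤ s := by
    rw [← hsum, ← sum_pair hkj]
    exact sum_le_sum_of_subset (subset_univ _)
  have := hw j hj
  have := hw k hk
  omega

namespace GRScode

variable {n : ℕ} {F : Type*} [Field F] {α : Fin n → F} {i : ℕ} {c : Fin n → F}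

lemma mem_succ_iff :
    c ∈ GRScode α (i + 1) ↔ c ∈ GRScode α i ∧ ∑ x, α x ^ i * c x = 0 := by
  simp only [GRScode, Set.mem_ofPred_eq, Nat.lt_succ_iff_lt_or_eq, or_imp, forall_and,
    forall_eq]

lemma sum_eval_mul_eq_zero (hc : c ∈ GRScode α i) {p : F[X]} (hp : p.natDegree < i) :
    ∑ x, p.eval (α x) * c x = 0 := by
  simp_rw [eval_eq_sum_range, sum_mul, mul_assoc]
  rw [sum_comm]
  refine sum_eq_zero fun k hk => ?_
  rw [← mul_sum, hc k (by simp at hk; omega), mul_zero]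

lemma succ_le_hWt [DecidableEq F] (hα : Function.Injective α) (hc : c ∈ GRScode α i)
    (hc0 : c ≠ 0) : i + 1 ≤ hWt c := by
  by_contra! hlt
  obtain ⟨t, ht⟩ := Function.ne_iff.mp hc0
  set S := univ.filter (fun x => c x ≠ 0)
  have htS : t ∈ S := by simpa [S] using ht
  -- The polynomial vanishing on the rest of the support isolates the coordinate `t`.
  set p : F[X] := ∏ s ∈ S.erase t, (X - C (α s))
  have hp : p.natDegree < i := by
    rw [natDegree_finsetProd_X_sub_C_eq_card, card_erase_of_mem htS]
    have : 0 < S.card := card_pos.mpr ⟨t, htS⟩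
    have : S.card < i + 1 := hlt
    omega
  have hsingle : ∑ x, p.eval (α x) * c x = p.eval (α t) * c t := by
    refine sum_eq_single t (fun x _ hxt => ?_) (by simp)
    by_cases hx : c x = 0
    · rw [hx, mul_zero]
    · have hxS : x ∈ S.erase t := mem_erase.mpr ⟨hxt, by simpa [S] using hx⟩
      rw [eval_prod, prod_eq_zero hxS (by simp), zero_mul]
  have hpt : p.eval (α t) ≠ 0 := by
    rw [eval_prod, prod_ne_zero_iff]
    intro s hs
    simpa [sub_eq_zero] using fun h => (mem_erase.mp hs).1 (hα h).symm
  rw [sum_eval_mul_eq_zero hc hp] at hsingle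
  exact mul_ne_zero hpt ht hsingle.symm

end GRScode

lemma sum_pow_mul_block_eq {n M N : ℕ} {F : Type*} [Field F] {α : Fin n → F}
    {A : Matrix (Fin M) (Fin N) F} {x : Fin M → Fin n → F} {y : Fin N × Fin n → F}
    (hyx : ∀ j i, y (j, i) = ∑ m, A m j * x m i) (k : ℕ) (j : Fin N) :
    ∑ i, α i ^ k * y (j, i) = ∑ m, A m j * ∑ i, α i ^ k * x m i := by
  simp_rw [hyx, mul_sum]
  rw [sum_comm]
  exact sum_congr rfl fun m _ => sum_congr rfl fun i _ => by ring

lemma exists_blocks_mem_GRScode_of_mem_MPcode {n M N : ℕ} {F : Type*} [Field F]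
    {α : Fin n → F} {A : Matrix (Fin (M + 1)) (Fin N) F} (hA : ∀ j, A 0 j = 1)
    {y : Fin N × Fin n → F}
    (hy : y ∈ MPcode (fun m : Fin (M + 1) => GRScode α (m.val + 1)) A) :
    ∃ L, ∀ j, (fun i => y (j, i)) ∈ GRScode α 1 ∧ ∑ i, α i * y (j, i) = L := by
  obtain ⟨x, hx, hyx⟩ := hy
  refine ⟨∑ i, α i * x 0 i, fun j => ⟨fun k hk => ?_, ?_⟩⟩
  · rw [sum_pow_mul_block_eq hyx]
    exact sum_eq_zero fun m _ => by rw [hx m k (by omega), mul_zero]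
  · have h := sum_pow_mul_block_eq (α := α) hyx 1 j
    simp only [pow_one] at h
    rw [h, Fin.sum_univ_succ, hA, one_mul, add_eq_left]
    refine sum_eq_zero fun m _ => ?_
    have hm := hx m.succ 1 (by simp)
    simp only [pow_one] at hm
    rw [hm, mul_zero]

theorem stmt17_general {F : Type*} [Field F] [DecidableEq F]
    {n : ℕ}
    (α : Fin n → F) (hα : Function.Injective α)
    (ω : F)
    (y : Fin 3 × Fin n → F)
    (hy : y ∈ MPcode (fun m : Fin 3 => GRScode α (m.val + 1))
        (!![1, 1, 1; 1, ω, ω ^ 2; 1, ω ^ 2, ω] : Matrix (Fin 3) (Fin 3) F))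
    (hw : hWt y = 4) :
    ∃! j : Fin 3, (fun i => y (j, i)) ≠ (0 : Fin n → F) := by
  obtain ⟨L, hL⟩ := exists_blocks_mem_GRScode_of_mem_MPcode (fun j => by fin_cases j <;> rfl) hy
  rw [hWt_prod] at hw
  by_cases hL0 : L = 0
  · have h3 (j : Fin 3) (hj : hWt (fun i => y (j, i)) ≠ 0) : 3 ≤ hWt (fun i => y (j, i)) :=
      GRScode.succ_le_hWt hα (GRScode.mem_succ_iff.mpr ⟨(hL j).1, by simpa [hL0] using (hL j).2⟩)
        (mt hWt_eq_zero_iff.mpr hj)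
    simpa only [ne_eq, hWt_eq_zero_iff] using
      existsUnique_ne_zero_of_sum_eq hw (by norm_num) (by norm_num) h3
  · have h2 (j : Fin 3) : 2 ≤ hWt (fun i => y (j, i)) :=
      GRScode.succ_le_hWt hα (hL j).1 fun h0 => hL0 (by simp [← (hL j).2, funext_iff.mp h0])
    have := sum_le_sum fun j (_ : j ∈ univ) => h2 j
    simp [hw] at this

/-- In the matrix-product code `[GRS_1, GRS_2, GRS_3]·A`, a codeword of Hamming
weight `4` has exactly one nonzero block. -/
theorem stmt17 {F : Type*} [Field F] [Fintype F] [DecidableEq F]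
    (hq : Fintype.card F % 3 = 1) {n : ℕ} (hn4 : 4 ≤ n) (hnq : n ≤ Fintype.card F)
    (α : Fin n → F) (hα : Function.Injective α)
    (ω : F) (hω3 : ω ^ 3 = 1) (hω1 : ω ≠ 1)
    (y : Fin 3 × Fin n → F)
    (hy : y ∈ MPcode (fun m : Fin 3 => GRScode α (m.val + 1))
        (!![1, 1, 1; 1, ω, ω ^ 2; 1, ω ^ 2, ω] : Matrix (Fin 3) (Fin 3) F))
    (hw : hWt y = 4) :
    ∃! j : Fin 3, (fun i => y (j, i)) ≠ (0 : Fin n → F) :=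
  stmt17_general α hα ω y hy hw
end
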